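/- arXiv:2502.19904 — 3 statements merged into one kernel-verified Lean document; each statement's English description precedes it below -/
import Mathlib

section
/- Let E and F be complex Hilbert spaces and let d be a densely defined closed linear operator from E to F whose adjoint d† is densely defined. On the Hilbert space H = E ×₂ F (the product equipped with the ℓ²-inner product ⟨(f,F),(g,G)⟩ = ⟨f,g⟩ + ⟨F,G⟩), define the operator D with domain (dom d) × (dom d†) by D(f, F) = (d† F, d f). Then D is self-adjoint: the adjoint of D (as a densely defined operator on H) equals D, i.e. they have the same domain and the same action. -/
/-!
`D` is symmetric because `d†` is a formal adjoint of `d`. Conversely, pairing `y ∈ dom D†` with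
the test vectors `(x, 0)` and `(0, x)` shows `y.snd ∈ dom d†` and `y.fst ∈ dom d††`, with `D† y`
given by the formula for `D`. Since `d` is closed, its graph equals its double orthogonal
complement, i.e. `d†† = d`, so `y ∈ dom D`.
-/

open scoped InnerProductSpace

namespace Submodule

variable {𝕜 E F : Type*} [RCLike 𝕜] [NormedAddCommGroup E] [InnerProductSpace 𝕜 E]
  [CompleteSpace E] [NormedAddCommGroup F] [InnerProductSpace 𝕜 F] [CompleteSpace F]

theorem adjoint_adjoint_of_isClosed {g : Submodule 𝕜 (E × F)} (hg : IsClosed (g : Set (E × F))) :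
    g.adjoint.adjoint = g := by
  refine le_antisymm (fun x hx => ?_) fun x hx => (mem_adjoint_iff _ _).2 fun a b hab => ?_
  · set G := g.comap (WithLp.linearEquiv 2 𝕜 (E × F)).toLinearMap
    have : CompleteSpace G :=
      (hg.preimage (WithLp.prod_continuous_ofLp 2 E F)).completeSpace_coe
    suffices WithLp.toLp 2 x ∈ Gᗮᗮ by simpa [G, orthogonal_orthogonal] using this
    refine (mem_orthogonal _ _).2 fun w hw => ?_
    have hw' : (w.snd, -w.fst) ∈ g.adjoint := by
      refine (mem_adjoint_iff _ _).2 fun a b hab => ?_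
      have := (mem_orthogonal _ _).1 hw (WithLp.toLp 2 (a, b)) (by simpa [G] using hab)
      simpa [inner_neg_right, add_comm] using this
    have := (mem_adjoint_iff _ _).1 hx _ _ hw'
    rw [inner_neg_left, neg_sub_left, neg_eq_zero] at this
    simpa [add_comm] using this
  · have := congrArg (starRingEnd 𝕜) ((mem_adjoint_iff _ _).1 hab x.1 x.2 hx)
    simpa [sub_eq_zero, eq_comm] using this

end Submodule

namespace LinearPMap

variable {𝕜 E F : Type*} [RCLike 𝕜] [NormedAddCommGroup E] [InnerProductSpace 𝕜 E]
  [CompleteSpace E] [NormedAddCommGroup F] [InnerProductSpace 𝕜 F]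

theorem exists_adjoint_apply_eq {T : E →ₗ.[𝕜] F} (hT : Dense (T.domain : Set E)) {y : F} {w : E}
    (h : ∀ x : T.domain, ⟪w, x⟫_𝕜 = ⟪y, T x⟫_𝕜) :
    ∃ hy : y ∈ T.adjoint.domain, T.adjoint ⟨y, hy⟩ = w :=
  ⟨mem_adjoint_domain_of_exists y ⟨w, h⟩, adjoint_apply_eq hT _ h⟩

theorem IsClosed.adjoint_adjoint [CompleteSpace F] {T : E →ₗ.[𝕜] F} (hT : T.IsClosed)
    (hdense : Dense (T.domain : Set E)) (hdense' : Dense (T.adjoint.domain : Set F)) :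
    T.adjoint.adjoint = T :=
  eq_of_eq_graph <| by
    rw [adjoint_graph_eq_graph_adjoint hdense', adjoint_graph_eq_graph_adjoint hdense,
      Submodule.adjoint_adjoint_of_isClosed hT]

end LinearPMap

section Dirac

open LinearPMap

variable {𝕜 E F : Type*} [RCLike 𝕜] [NormedAddCommGroup E] [InnerProductSpace 𝕜 E]
  [CompleteSpace E] [NormedAddCommGroup F] [InnerProductSpace 𝕜 F]
  {d : E →ₗ.[𝕜] F} {D : WithLp 2 (E × F) →ₗ.[𝕜] WithLp 2 (E × F)}

theorem dense_domain_of_dirac (hdense : Dense (d.domain : Set E))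
    (hadj_dense : Dense (d.adjoint.domain : Set F))
    (hdom : ∀ x : WithLp 2 (E × F), x ∈ D.domain ↔ x.fst ∈ d.domain ∧ x.snd ∈ d.adjoint.domain) :
    Dense (D.domain : Set (WithLp 2 (E × F))) := by
  have hdomain : (D.domain : Set (WithLp 2 (E × F))) =
      WithLp.ofLp ⁻¹' ((d.domain : Set E) ×ˢ (d.adjoint.domain : Set F)) :=
    Set.ext hdom
  rw [hdomain]
  exact (hdense.prod hadj_dense).preimage
    (WithLp.prodContinuousLinearEquiv 2 𝕜 E F).toHomeomorph.isOpenMap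

theorem isFormalAdjoint_self_of_dirac (hdense : Dense (d.domain : Set E))
    (hdom : ∀ x : WithLp 2 (E × F), x ∈ D.domain ↔ x.fst ∈ d.domain ∧ x.snd ∈ d.adjoint.domain)
    (hact : ∀ (x : WithLp 2 (E × F)) (hx : x ∈ D.domain),
      (D ⟨x, hx⟩).fst = d.adjoint ⟨x.snd, ((hdom x).mp hx).2⟩ ∧
      (D ⟨x, hx⟩).snd = d ⟨x.fst, ((hdom x).mp hx).1⟩) :
    D.IsFormalAdjoint D := by
  rintro ⟨x, hx⟩ ⟨y, hy⟩
  have hd := adjoint_isFormalAdjoint hdense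
  simp only [WithLp.prod_inner_apply, WithLp.ofLp_fst, WithLp.ofLp_snd, (hact x hx).1,
    (hact x hx).2, (hact y hy).1, (hact y hy).2]
  rw [hd ⟨x.snd, _⟩ ⟨y.fst, _⟩, ← hd.symm ⟨x.fst, _⟩ ⟨y.snd, _⟩, add_comm]

theorem adjoint_le_of_dirac [CompleteSpace F] (hdense : Dense (d.domain : Set E))
    (hclosed : d.IsClosed)
    (hadj_dense : Dense (d.adjoint.domain : Set F))
    (hdom : ∀ x : WithLp 2 (E × F), x ∈ D.domain ↔ x.fst ∈ d.domain ∧ x.snd ∈ d.adjoint.domain)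
    (hact : ∀ (x : WithLp 2 (E × F)) (hx : x ∈ D.domain),
      (D ⟨x, hx⟩).fst = d.adjoint ⟨x.snd, ((hdom x).mp hx).2⟩ ∧
      (D ⟨x, hx⟩).snd = d ⟨x.fst, ((hdom x).mp hx).1⟩) :
    D.adjoint ≤ D := by
  have hD := D.adjoint_isFormalAdjoint (dense_domain_of_dirac hdense hadj_dense hdom)
  have adjoint_fst : ∀ y : D.adjoint.domain,
      ∃ h : (y : WithLp 2 (E × F)).snd ∈ d.adjoint.domain,
        d.adjoint ⟨_, h⟩ = (D.adjoint y).fst := by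
    intro y
    refine exists_adjoint_apply_eq hdense fun x => ?_
    have hx : WithLp.toLp 2 ((x : E), (0 : F)) ∈ D.domain := (hdom _).2 ⟨x.2, zero_mem _⟩
    have := hD y ⟨_, hx⟩
    simpa [(hact _ hx).1, (hact _ hx).2, ← ZeroMemClass.zero_def] using this
  have adjoint_snd : ∀ y : D.adjoint.domain,
      ∃ h : (y : WithLp 2 (E × F)).fst ∈ d.domain, d ⟨_, h⟩ = (D.adjoint y).snd := by
    intro y
    rw [← hclosed.adjoint_adjoint hdense hadj_dense]
    refine exists_adjoint_apply_eq hadj_dense fun x => ?_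
    have hx : WithLp.toLp 2 ((0 : E), (x : F)) ∈ D.domain := (hdom _).2 ⟨zero_mem _, x.2⟩
    have := hD y ⟨_, hx⟩
    simpa [(hact _ hx).1, (hact _ hx).2, ← ZeroMemClass.zero_def] using this
  refine ⟨fun y hy => (hdom y).2 ⟨(adjoint_snd ⟨y, hy⟩).1, (adjoint_fst ⟨y, hy⟩).1⟩, ?_⟩
  rintro ⟨y, hy⟩ ⟨z, hz⟩ (rfl : y = z)
  obtain ⟨_, h₁⟩ := adjoint_fst ⟨y, hy⟩
  obtain ⟨_, h₂⟩ := adjoint_snd ⟨y, hy⟩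
  exact WithLp.ofLp_injective 2 <|
    Prod.ext (h₁.symm.trans (hact y hz).1.symm) (h₂.symm.trans (hact y hz).2.symm)

end Dirac

/-- The abstract first-order (Dirac-type) operator `D (f, F) = (d† F, d f)` associated with a
densely defined closed operator `d` (abstract exterior derivative) with densely defined adjoint
is self-adjoint on `E ×₂ F`. -/
theorem dirac_operator_isSelfAdjoint
    {E F : Type*} [NormedAddCommGroup E] [InnerProductSpace ℂ E] [CompleteSpace E]
    [NormedAddCommGroup F] [InnerProductSpace ℂ F] [CompleteSpace F]
    (d : E →ₗ.[ℂ] F)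
    (hdense : Dense (d.domain : Set E))
    (hclosed : d.IsClosed)
    (hadj_dense : Dense ((d.adjoint).domain : Set F))
    (D : WithLp 2 (E × F) →ₗ.[ℂ] WithLp 2 (E × F))
    (hdom : ∀ x : WithLp 2 (E × F),
      x ∈ D.domain ↔ x.fst ∈ d.domain ∧ x.snd ∈ d.adjoint.domain)
    (hact : ∀ (x : WithLp 2 (E × F)) (hx : x ∈ D.domain),
      (D ⟨x, hx⟩).fst = d.adjoint ⟨x.snd, ((hdom x).mp hx).2⟩ ∧
      (D ⟨x, hx⟩).snd = d ⟨x.fst, ((hdom x).mp hx).1⟩) :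
    D.adjoint = D :=
  le_antisymm (adjoint_le_of_dirac hdense hclosed hadj_dense hdom hact) <|
    (isFormalAdjoint_self_of_dirac hdense hdom hact).le_adjoint
      (dense_domain_of_dirac hdense hadj_dense hdom)
end

section
/- (Transfer of scalar L² estimates to vector-valued functions via Kato's inequality.) Let E be a finite-dimensional real inner product space, m ≥ 1, and let X₁ ⊆ X₂ ⊆ ℝᵐ be Lebesgue-measurable sets. Let C, C' ≥ 0 and suppose that every Lipschitz function u : ℝᵐ → ℝ satisfies ∫_{X₁} |u(x)|² dx ≤ C' ∫_{X₂} ‖fderiv u x‖² dx + C ∫_{X₂} |u(x)|² dx. Then every Lipschitz function ω : ℝᵐ → E satisfies ∫_{X₁} ‖ω(x)‖² dx ≤ C' ∫_{X₂} ‖fderiv ω x‖² dx + C ∫_{X₂} ‖ω(x)‖² dx, where ‖fderiv ω x‖ is the operator norm of the Fréchet derivative. -/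
/-!
Apply the scalar estimate to `u = ‖ω‖`, which is Lipschitz with the same constant. Kato's
inequality `‖D‖ω‖‖ ≤ ‖Dω‖` holds wherever both maps are differentiable, because
`|‖ω y‖ - ‖ω x‖| ≤ ‖ω y - ω x‖` bounds every difference quotient of `‖ω‖` by one of `ω`; by
Rademacher's theorem this is almost everywhere, so the gradient term only grows.
-/

open MeasureTheory Filter Topology

theorem LipschitzWith.norm {X F : Type*} [PseudoEMetricSpace X] [SeminormedAddCommGroup F]
    {K : NNReal} {f : X → F} (hf : LipschitzWith K f) : LipschitzWith K (fun x ↦ ‖f x‖) := by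
  simpa [Function.comp_def] using lipschitzWith_one_norm.comp hf

section FDerivComparison

variable {X F G : Type*} [NormedAddCommGroup X] [NormedSpace ℝ X]
  [NormedAddCommGroup F] [NormedSpace ℝ F] [NormedAddCommGroup G] [NormedSpace ℝ G]

theorem norm_fderiv_le_of_eventually_norm_sub_le {f : X → F} {g : X → G} {x : X}
    (hf : DifferentiableAt ℝ f x) (hg : DifferentiableAt ℝ g x)
    (hfg : ∀ᶠ y in 𝓝 x, ‖f y - f x‖ ≤ ‖g y - g x‖) :
    ‖fderiv ℝ f x‖ ≤ ‖fderiv ℝ g x‖ := by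
  refine (fderiv ℝ f x).opNorm_le_bound (norm_nonneg _) fun v ↦ ?_
  have hline : Tendsto (fun t : ℝ ↦ x + t • v) (𝓝[≠] 0) (𝓝 x) := by
    refine tendsto_nhdsWithin_of_tendsto_nhds <| Continuous.tendsto' ?_ 0 x (by simp)
    fun_prop
  have hslopes : ∀ᶠ t : ℝ in 𝓝[≠] 0,
      ‖t⁻¹ • (f (x + t • v) - f x)‖ ≤ ‖t⁻¹ • (g (x + t • v) - g x)‖ := by
    filter_upwards [hline.eventually hfg] with t ht
    rw [norm_smul, norm_smul]
    gcongr
  calc ‖fderiv ℝ f x v‖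
      ≤ ‖fderiv ℝ g x v‖ :=
        le_of_tendsto_of_tendsto (hf.hasFDerivAt.hasLineDerivAt v).tendsto_slope_zero.norm
          (hg.hasFDerivAt.hasLineDerivAt v).tendsto_slope_zero.norm hslopes
    _ ≤ ‖fderiv ℝ g x‖ * ‖v‖ := (fderiv ℝ g x).le_opNorm v

theorem norm_fderiv_norm_le {ω : X → F} {x : X}
    (hω : DifferentiableAt ℝ ω x) (hnorm : DifferentiableAt ℝ (fun y ↦ ‖ω y‖) x) :
    ‖fderiv ℝ (fun y ↦ ‖ω y‖) x‖ ≤ ‖fderiv ℝ ω x‖ :=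
  norm_fderiv_le_of_eventually_norm_sub_le hnorm hω <|
    Eventually.of_forall fun y ↦ abs_norm_sub_norm_le (ω y) (ω x)

end FDerivComparison

theorem LipschitzWith.ae_norm_fderiv_norm_le
    {X F : Type*} [NormedAddCommGroup X] [NormedSpace ℝ X] [FiniteDimensional ℝ X]
    [MeasurableSpace X] [BorelSpace X] (μ : Measure X) [μ.IsAddHaarMeasure]
    [NormedAddCommGroup F] [NormedSpace ℝ F] [FiniteDimensional ℝ F]
    {K : NNReal} {ω : X → F} (hω : LipschitzWith K ω) :
    ∀ᵐ x ∂μ, ‖fderiv ℝ (fun y ↦ ‖ω y‖) x‖ ≤ ‖fderiv ℝ ω x‖ := by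
  filter_upwards [hω.ae_differentiableAt, hω.norm.ae_differentiableAt] with x hωx hnormx
  exact norm_fderiv_norm_le hωx hnormx

theorem scalar_estimate_transfers_to_vector_valued_general
    {m : ℕ}
    {E : Type*} [NormedAddCommGroup E] [InnerProductSpace ℝ E] [FiniteDimensional ℝ E]
    (X₁ X₂ : Set (EuclideanSpace ℝ (Fin m)))
    (C C' : NNReal)
    (hscalar : ∀ (K : NNReal) (u : EuclideanSpace ℝ (Fin m) → ℝ), LipschitzWith K u →
      (∫⁻ x in X₁, (‖u x‖₊ : ENNReal) ^ 2)
        ≤ C' * (∫⁻ x in X₂, (‖fderiv ℝ u x‖₊ : ENNReal) ^ 2)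
          + C * (∫⁻ x in X₂, (‖u x‖₊ : ENNReal) ^ 2)) :
    ∀ (K : NNReal) (ω : EuclideanSpace ℝ (Fin m) → E), LipschitzWith K ω →
      (∫⁻ x in X₁, (‖ω x‖₊ : ENNReal) ^ 2)
        ≤ C' * (∫⁻ x in X₂, (‖fderiv ℝ ω x‖₊ : ENNReal) ^ 2)
          + C * (∫⁻ x in X₂, (‖ω x‖₊ : ENNReal) ^ 2) := by
  intro K ω hω
  have hgrad : ∫⁻ x in X₂, (‖fderiv ℝ (fun y ↦ ‖ω y‖) x‖₊ : ENNReal) ^ 2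
      ≤ ∫⁻ x in X₂, (‖fderiv ℝ ω x‖₊ : ENNReal) ^ 2 := by
    refine lintegral_mono_ae <| ae_restrict_of_ae ?_
    filter_upwards [hω.ae_norm_fderiv_norm_le volume] with x hx
    gcongr
    exact_mod_cast hx
  calc ∫⁻ x in X₁, (‖ω x‖₊ : ENNReal) ^ 2
      = ∫⁻ x in X₁, (‖‖ω x‖‖₊ : ENNReal) ^ 2 := by simp only [nnnorm_norm]
    _ ≤ C' * (∫⁻ x in X₂, (‖fderiv ℝ (fun y ↦ ‖ω y‖) x‖₊ : ENNReal) ^ 2)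
          + C * (∫⁻ x in X₂, (‖‖ω x‖‖₊ : ENNReal) ^ 2) := hscalar K _ hω.norm
    _ ≤ C' * (∫⁻ x in X₂, (‖fderiv ℝ ω x‖₊ : ENNReal) ^ 2)
          + C * (∫⁻ x in X₂, (‖ω x‖₊ : ENNReal) ^ 2) := by simp only [nnnorm_norm]; gcongr

/-- Transfer of scalar L² estimates to vector-valued Lipschitz functions via Kato's
inequality: if every scalar Lipschitz function `u` satisfies
`∫_{X₁} |u|² ≤ C' ∫_{X₂} ‖fderiv u‖² + C ∫_{X₂} |u|²`, then every Lipschitz map `ω` into a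
finite-dimensional real inner product space `E` satisfies the same estimate with norms. -/
theorem scalar_estimate_transfers_to_vector_valued
    {m : ℕ} (hm : 1 ≤ m)
    {E : Type*} [NormedAddCommGroup E] [InnerProductSpace ℝ E] [FiniteDimensional ℝ E]
    (X₁ X₂ : Set (EuclideanSpace ℝ (Fin m)))
    (hX₁ : MeasurableSet X₁) (hX₂ : MeasurableSet X₂) (hsub : X₁ ⊆ X₂)
    (C C' : NNReal)
    (hscalar : ∀ (K : NNReal) (u : EuclideanSpace ℝ (Fin m) → ℝ), LipschitzWith K u →
      (∫⁻ x in X₁, (‖u x‖₊ : ENNReal) ^ 2)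
        ≤ C' * (∫⁻ x in X₂, (‖fderiv ℝ u x‖₊ : ENNReal) ^ 2)
          + C * (∫⁻ x in X₂, (‖u x‖₊ : ENNReal) ^ 2)) :
    ∀ (K : NNReal) (ω : EuclideanSpace ℝ (Fin m) → E), LipschitzWith K ω →
      (∫⁻ x in X₁, (‖ω x‖₊ : ENNReal) ^ 2)
        ≤ C' * (∫⁻ x in X₂, (‖fderiv ℝ ω x‖₊ : ENNReal) ^ 2)
          + C * (∫⁻ x in X₂, (‖ω x‖₊ : ENNReal) ^ 2) :=
  scalar_estimate_transfers_to_vector_valued_general X₁ X₂ C C' hscalar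
end

section
/- (One-endpoint optimal Sobolev trace estimate.) Let ℓ > 0 and let f : ℝ → ℂ be continuous on [0, ℓ], differentiable on (0, ℓ), and such that both f and its derivative f' are square-integrable on (0, ℓ). Then |f(0)|² ≤ coth(ℓ) · ( ∫₀^ℓ |f'(s)|² ds + ∫₀^ℓ |f(s)|² ds ). -/
/-!
Weight `‖f‖²` by `h(s) = tanh (ℓ - s)`, which solves the Riccati equation `h' = h² - 1` and
vanishes at `ℓ`. Then `-(h ‖f‖²)' = ‖f'‖² + ‖f‖² - ‖f' + h f‖² ≤ ‖f'‖² + ‖f‖²`, and integrating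
over `[0, ℓ]` gives `tanh ℓ · ‖f 0‖² ≤ ‖f'‖²_{L²} + ‖f‖²_{L²}`. Equality holds exactly when
`f' + h f = 0`, i.e. for multiples of `cosh (ℓ - s)`.
-/

open MeasureTheory Set

theorem Real.hasDerivAt_tanh (x : ℝ) : HasDerivAt Real.tanh (1 - Real.tanh x ^ 2) x := by
  have hcosh := (Real.cosh_pos x).ne'
  rw [show Real.tanh = fun y => Real.sinh y / Real.cosh y from
    funext Real.tanh_eq_sinh_div_cosh]
  refine ((Real.hasDerivAt_sinh x).div (Real.hasDerivAt_cosh x) hcosh).congr_deriv ?_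
  field_simp

theorem Real.continuous_tanh : Continuous Real.tanh :=
  continuous_iff_continuousAt.mpr fun x => (Real.hasDerivAt_tanh x).continuousAt

theorem hasDerivAt_tanh_const_sub (b s : ℝ) :
    HasDerivAt (fun t => Real.tanh (b - t)) (Real.tanh (b - s) ^ 2 - 1) s :=
  ((Real.hasDerivAt_tanh (b - s)).comp s ((hasDerivAt_id s).const_sub b)).congr_deriv
    (by ring)

section InnerProductSpace

variable {E : Type*} [NormedAddCommGroup E] [InnerProductSpace ℝ E]

theorem one_sub_sq_mul_norm_sq_sub_two_mul_inner_le (h : ℝ) (x v : E) :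
    (1 - h ^ 2) * ‖x‖ ^ 2 - h * (2 * inner ℝ x v) ≤ ‖v‖ ^ 2 + ‖x‖ ^ 2 := by
  have hsq : ‖v + h • x‖ ^ 2 = ‖v‖ ^ 2 + 2 * h * inner ℝ x v + h ^ 2 * ‖x‖ ^ 2 := by
    rw [norm_add_sq_real, inner_smul_right, real_inner_comm, norm_smul, mul_pow,
      Real.norm_eq_abs, sq_abs]
    ring
  linarith [sq_nonneg ‖v + h • x‖]

theorem tanh_mul_norm_sq_le_integral {a b : ℝ} (hab : a ≤ b) {f f' : ℝ → E}
    (hcont : ContinuousOn f (Icc a b)) (hderiv : ∀ s ∈ Ioo a b, HasDerivAt f (f' s) s)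
    (hint : IntegrableOn (fun s => ‖f' s‖ ^ 2 + ‖f s‖ ^ 2) (Icc a b)) :
    Real.tanh (b - a) * ‖f a‖ ^ 2 ≤ ∫ s in a..b, ‖f' s‖ ^ 2 + ‖f s‖ ^ 2 := by
  set g : ℝ → ℝ := fun s => -(Real.tanh (b - s) * ‖f s‖ ^ 2)
  have hg_cont : ContinuousOn g (Icc a b) :=
    ((Real.continuous_tanh.comp (continuous_sub_left b)).continuousOn.mul
      (hcont.norm.pow 2)).neg
  have hg_deriv : ∀ s ∈ Ioo a b, HasDerivAt g
      (-((Real.tanh (b - s) ^ 2 - 1) * ‖f s‖ ^ 2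
        + Real.tanh (b - s) * (2 * inner ℝ (f s) (f' s)))) s :=
    fun s hs => ((hasDerivAt_tanh_const_sub b s).mul (hderiv s hs).norm_sq).neg
  have hbound := intervalIntegral.sub_le_integral_of_hasDeriv_right_of_le hab hg_cont
    (fun s hs => (hg_deriv s hs).hasDerivWithinAt) hint
    (fun s _ => by
      have := one_sub_sq_mul_norm_sq_sub_two_mul_inner_le (Real.tanh (b - s)) (f s) (f' s)
      linarith)
  simpa [g] using hbound

end InnerProductSpace

/-- One-endpoint optimal Sobolev trace estimate: for `f ∈ H¹(0, ℓ)` (continuous on `[0, ℓ]`,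
differentiable on `(0, ℓ)`, with `f` and `f'` square-integrable),
`|f 0|² ≤ coth ℓ · (‖f'‖²_{L²} + ‖f‖²_{L²})`. -/
theorem sobolev_trace_estimate_one_endpoint
    {ℓ : ℝ} (hℓ : 0 < ℓ) (f f' : ℝ → ℂ)
    (hcont : ContinuousOn f (Set.Icc 0 ℓ))
    (hderiv : ∀ s ∈ Set.Ioo 0 ℓ, HasDerivAt f (f' s) s)
    (hf2 : IntegrableOn (fun s => ‖f s‖ ^ 2) (Set.Ioo 0 ℓ))
    (hf'2 : IntegrableOn (fun s => ‖f' s‖ ^ 2) (Set.Ioo 0 ℓ)) :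
    ‖f 0‖ ^ 2 ≤ (Real.cosh ℓ / Real.sinh ℓ) *
      ((∫ s in Set.Ioo 0 ℓ, ‖f' s‖ ^ 2) + ∫ s in Set.Ioo 0 ℓ, ‖f s‖ ^ 2) := by
  have hsinh : 0 < Real.sinh ℓ := Real.sinh_pos_iff.mpr hℓ
  have hcosh : 0 < Real.cosh ℓ := Real.cosh_pos ℓ
  have key := tanh_mul_norm_sq_le_integral hℓ.le hcont hderiv
    ((integrableOn_Icc_iff_integrableOn_Ioo).mpr (hf'2.add hf2))
  rw [sub_zero, intervalIntegral.integral_of_le hℓ.le, integral_Ioc_eq_integral_Ioo,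
    integral_add hf'2 hf2, Real.tanh_eq_sinh_div_cosh] at key
  calc ‖f 0‖ ^ 2 = (Real.cosh ℓ / Real.sinh ℓ) * (Real.sinh ℓ / Real.cosh ℓ * ‖f 0‖ ^ 2) := by
        field_simp
    _ ≤ _ := by gcongr
end
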